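/- Let n ≥ 2 be an even natural number and z ∈ ℂ with |z| < 1. Then ∫₀¹ z·(zt)^{n/2}·(1 − (zt)^n)^{−(n+2)/n} dt = (2/(n+2)) · ∑_{k=0}^∞ ((1+2/n)_k (1/2+1/n)_k)/((3/2+1/n)_k · k!) · z^{nk+n/2+1}, where (1 − (zt)^n)^{−(n+2)/n} is the principal-branch complex power. In other words, the third-coordinate function ψ of the minimal surface lift of the harmonic shear of the polygonal mapping φ(z) = ∫₀^z (1−ζ^n)^{−2/n} dζ with dilatation ω(z) = z^n = (z^{n/2})² is ψ(z) = (2 z^{(n+2)/2}/(n+2))·F(1+2/n, 1/2+1/n; 3/2+1/n; z^n). -/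

import Mathlib

/-!
With `a = (n + 2)/n` and `w = (zt)^n`, expand `(1 - w)^(-a)` in the binomial series
`∑ (a)_k/k! · w^k` and integrate term by term over `t ∈ [0, 1]`; the series is dominated by
the convergent `∑ ‖(a)_k/k!‖ · ‖z‖^(nk)`. This gives `∑ (a)_k/k! · z^(nk+m+1)/(nk+m+1)` with
`n = 2m`, and the hypergeometric form comes from `nk + m + 1 = n(b + k)` for `b = 1/2 + 1/n`
together with `(b)_k/(b+1)_k = b/(b+k)`.
-/

open FormalMultilinearSeries MeasureTheory Set Polynomial
open scoped Nat

theorem Ring.choose_add_sub_one_eq_ascPochhammer_eval_div {K : Type*} [Field K] [CharZero K]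
    (a : K) (n : ℕ) : Ring.choose (a + n - 1) n = (ascPochhammer K n).eval a / (n ! : K) := by
  rw [Ring.choose_eq_smul, descPochhammer_smeval_eq_ascPochhammer,
    show a + n - 1 - n + 1 = a by ring, ascPochhammer_smeval_eq_eval, smul_eq_mul, div_eq_inv_mul]

theorem ascPochhammer_eval_mul_add_natCast {R : Type*} [CommSemiring R] (b : R) (k : ℕ) :
    (ascPochhammer R k).eval b * (b + k) = b * (ascPochhammer R k).eval (b + 1) := by
  rw [← ascPochhammer_succ_eval, ascPochhammer_succ_left]
  simp [eval_comp]

theorem ascPochhammer_eval_div_eval_add_one {K : Type*} [Field K] {b : K}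
    (hb : ∀ j : ℕ, b + j ≠ 0) (k : ℕ) :
    (ascPochhammer K k).eval b / (ascPochhammer K k).eval (b + 1) = b / (b + k) := by
  have hb₁ : (ascPochhammer K k).eval (b + 1) ≠ 0 := by
    rw [Ne, ascPochhammer_eval_eq_zero_iff]
    rintro ⟨j, -, hj⟩
    exact hb (j + 1) (by push_cast; rw [hj]; ring)
  rw [div_eq_div_iff hb₁ (hb k), ascPochhammer_eval_mul_add_natCast]

namespace Complex

theorem hasFPowerSeriesOnBall_one_sub_cpow_neg (a : ℂ) :
    HasFPowerSeriesOnBall (fun w ↦ (1 - w) ^ (-a))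
      (.ofScalars ℂ fun k ↦ (ascPochhammer ℂ k).eval a / (k ! : ℂ)) 0 1 := by
  have hf : (fun w : ℂ ↦ (1 - w) ^ (-a)) = fun w ↦ 1 / (1 - w) ^ a := by
    funext w
    rw [cpow_neg, one_div]
  simp_rw [hf, ← Ring.choose_add_sub_one_eq_ascPochhammer_eval_div]
  exact one_div_one_sub_cpow_hasFPowerSeriesOnBall_zero a

theorem hasSum_ascPochhammer_mul_pow (a : ℂ) {w : ℂ} (hw : ‖w‖ < 1) :
    HasSum (fun k ↦ (ascPochhammer ℂ k).eval a / (k ! : ℂ) * w ^ k) ((1 - w) ^ (-a)) := by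
  have hw' : w ∈ Metric.eball (0 : ℂ) 1 := by
    rw [← ENNReal.ofReal_one, Metric.eball_ofReal]
    simpa using hw
  simpa [ofScalars_apply_eq, mul_comm] using
    (hasFPowerSeriesOnBall_one_sub_cpow_neg a).hasSum hw'

theorem summable_norm_ascPochhammer_mul_pow (a : ℂ) {r : ℝ} (hr₀ : 0 ≤ r) (hr : r < 1) :
    Summable fun k ↦ ‖(ascPochhammer ℂ k).eval a / (k ! : ℂ)‖ * r ^ k := by
  have h := (hasFPowerSeriesOnBall_one_sub_cpow_neg a).r_le
  simpa [ofScalars_norm, hr₀] using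
    summable_norm_mul_pow _ (r := r.toNNReal) (lt_of_lt_of_le (by simpa using hr) h)

end Complex

theorem hasSum_intervalIntegral_of_hasSum_mul_pow {c : ℕ → ℂ} {e : ℕ → ℕ} {f : ℝ → ℂ}
    (hc : Summable fun k ↦ ‖c k‖)
    (hf : ∀ t ∈ Ioc (0 : ℝ) 1,
      HasSum (fun k ↦ c k * (t : ℂ) ^ e k) (f t)) :
    HasSum (fun k ↦ c k / (e k + 1)) (∫ t in (0 : ℝ)..1, f t) := by
  have hterm (k : ℕ) : ∫ t in (0 : ℝ)..1, c k * (t : ℂ) ^ e k = c k / (e k + 1) := by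
    simp_rw [intervalIntegral.integral_const_mul, ← Complex.ofReal_pow,
      intervalIntegral.integral_ofReal, integral_pow]
    simp [div_eq_mul_inv]
  simp_rw [← hterm]
  refine intervalIntegral.hasSum_integral_of_dominated_convergence (fun k _ ↦ ‖c k‖)
    (fun k ↦ by fun_prop) (fun k ↦ ae_of_all _ fun t ht ↦ ?_) (ae_of_all _ fun _ _ ↦ hc)
    intervalIntegrable_const (ae_of_all _ fun t ht ↦ hf t ?_)
  · rw [uIoc_of_le zero_le_one] at ht
    rw [norm_mul, norm_pow, Complex.norm_real, Real.norm_of_nonneg ht.1.le]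
    exact mul_le_of_le_one_right (norm_nonneg _) (pow_le_one₀ ht.1.le ht.2)
  · rwa [uIoc_of_le zero_le_one] at ht

theorem hasSum_intervalIntegral_mul_pow_mul_one_sub_pow_cpow_neg (a : ℂ) {z : ℂ}
    (hz : ‖z‖ < 1) {d : ℕ} (hd : d ≠ 0) (q : ℕ) :
    HasSum (fun k ↦ (ascPochhammer ℂ k).eval a / (k ! : ℂ) * z ^ (d * k + q + 1) /
        ((d * k + q : ℕ) + 1))
      (∫ t in (0 : ℝ)..1, z * (z * t) ^ q * (1 - (z * t) ^ d) ^ (-a)) := by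
  refine hasSum_intervalIntegral_of_hasSum_mul_pow (e := fun k ↦ d * k + q) ?_ fun t ht ↦ ?_
  · refine .of_nonneg_of_le (fun _ ↦ norm_nonneg _) (fun k ↦ ?_)
      (Complex.summable_norm_ascPochhammer_mul_pow a (pow_nonneg (norm_nonneg z) d)
        (pow_lt_one₀ (norm_nonneg z) hz hd))
    rw [norm_mul, norm_pow, ← pow_mul]
    exact mul_le_mul_of_nonneg_left (pow_le_pow_of_le_one (norm_nonneg z) hz.le (by omega))
      (norm_nonneg _)
  · have hzt : ‖(z * t) ^ d‖ < 1 := by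
      rw [norm_pow, norm_mul, Complex.norm_real, Real.norm_of_nonneg ht.1.le]
      exact pow_lt_one₀ (mul_nonneg (norm_nonneg z) ht.1.le)
        (mul_lt_one_of_nonneg_of_lt_one_left (norm_nonneg z) hz ht.2) hd
    refine ((Complex.hasSum_ascPochhammer_mul_pow a hzt).mul_left (z * (z * t) ^ q)).congr_fun
      fun k ↦ ?_
    simp only [← pow_mul, mul_pow]
    ring

theorem half_add_one_div_natCast_add_natCast_ne_zero (n j : ℕ) :
    1 / 2 + 1 / (n : ℂ) + j ≠ 0 := by
  have h : ((1 / 2 + 1 / n + j : ℝ) : ℂ) = 1 / 2 + 1 / (n : ℂ) + j := by push_cast; ring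
  rw [← h, Complex.ofReal_ne_zero]
  positivity

theorem one_div_natCast_mul_add_half_add_one {n m : ℕ} (hm : n = m + m) (hn : n ≠ 0) (k : ℕ) :
    1 / ((n * k + m : ℕ) + 1 : ℂ) =
      2 / ((n : ℂ) + 2) * ((1 / 2 + 1 / (n : ℂ)) / (1 / 2 + 1 / (n : ℂ) + k)) := by
  have hnC : (n : ℂ) ≠ 0 := Nat.cast_ne_zero.2 hn
  have hn2 : (n : ℂ) + 2 ≠ 0 := by exact_mod_cast (by omega : n + 2 ≠ 0)
  have hbk := half_add_one_div_natCast_add_natCast_ne_zero n k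
  have hden : ((n * k + m : ℕ) + 1 : ℂ) = n * (1 / 2 + 1 / n + k) := by
    have hmC : (m : ℂ) = n / 2 := by rw [hm]; push_cast; ring
    push_cast
    rw [hmC]
    field_simp
    ring
  rw [hden, mul_div_assoc', div_mul_eq_mul_div, div_div,
    div_eq_div_iff (mul_ne_zero hnC hbk) (mul_ne_zero hn2 hbk)]
  field_simp

/-- The third-coordinate function of the minimal surface lift of the harmonic shear of
the regular `n`-gon mapping (`n` even) with dilatation `ω(z) = z^n = (z^(n/2))²` is
`ψ(z) = (2 z^((n+2)/2)/(n+2))·F(1+2/n, 1/2+1/n; 3/2+1/n; z^n)`. -/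
theorem polygon_minimal_surface_lift
    (n : ℕ) (hn : 2 ≤ n) (hne : Even n) (z : ℂ) (hz : ‖z‖ < 1) :
    (∫ t in (0:ℝ)..1,
        z * (z * (t : ℂ)) ^ (n / 2) *
          ((1 : ℂ) - (z * (t : ℂ)) ^ n) ^ (-(((n : ℂ) + 2) / (n : ℂ)))) =
      (2 / ((n : ℂ) + 2)) *
        ∑' k : ℕ,
          (Polynomial.eval (1 + 2 / (n : ℂ)) (ascPochhammer ℂ k) *
              Polynomial.eval (1 / 2 + 1 / (n : ℂ)) (ascPochhammer ℂ k)) /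
            (Polynomial.eval (3 / 2 + 1 / (n : ℂ)) (ascPochhammer ℂ k) *
              (Nat.factorial k : ℂ)) * z ^ (n * k + n / 2 + 1) := by
  obtain ⟨m, hm⟩ := hne
  have hn0 : n ≠ 0 := by omega
  rw [show n / 2 = m by omega,
    ← (hasSum_intervalIntegral_mul_pow_mul_one_sub_pow_cpow_neg _ hz hn0 m).tsum_eq,
    ← tsum_mul_left]
  refine tsum_congr fun k ↦ ?_
  have hc : (1 : ℂ) + 2 / n = (n + 2) / n := by field_simp
  rw [hc, show (3 / 2 + 1 / n : ℂ) = 1 / 2 + 1 / n + 1 by ring, mul_comm _ (k ! : ℂ),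
    mul_div_mul_comm,
    ascPochhammer_eval_div_eval_add_one (half_add_one_div_natCast_add_natCast_ne_zero n),
    div_eq_mul_one_div _ ((n * k + m : ℕ) + 1 : ℂ), one_div_natCast_mul_add_half_add_one hm hn0]
  ring
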